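/- arXiv:1801.06083 — 2 statements merged into one kernel-verified Lean document; each statement's English description precedes it below -/
import Mathlib

section
/- In the formal power series ring (F[x])[[t]], the identity (q t² + x t + q^{-1}) · (q^{-1} t² + x t + q) · (∑_{n≥0} (−1)^n [n]_q U_{n−1}(x) t^n) = t³ − t holds. (This is the identity ∑_{n≥0} (−1)^n t^n [n]_q U_{n−1}(x) = (t − t^{-1}) / ((q t + q^{-1} t^{-1} + x)(q^{-1} t + q t^{-1} + x)) after multiplying by t² times the denominators.) -/
noncomputable section

open Polynomial

variable (F : Type) [Field F] (q : F)

/-- Monic Chebyshev polynomials of the second kind, indexed by ℕ: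
`U_0 = 1`, `U_1 = x`, `U_{n+2} = x·U_{n+1} - U_n`. -/
def Uc : ℕ → Polynomial F
  | 0 => 1
  | 1 => X
  | n + 2 => X * Uc (n + 1) - Uc n

/-- Monic Chebyshev polynomials of the second kind, indexed by ℤ (zero for negative index). -/
def U (n : ℤ) : Polynomial F := if 0 ≤ n then Uc F n.toNat else 0

/-- The q-integer `[n]_q = (qⁿ - q⁻ⁿ)/(q - q⁻¹)`. -/
def qint (n : ℤ) : F := (q ^ n - q ^ (-n)) / (q - q⁻¹)


/-! Since `∑ Uₙ sⁿ = 1 / (1 - x s + s²)`, the series `∑ (-a)ⁿ Uₙ tⁿ` inverts `1 + a x t + a² t²`.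
As `(-1)ⁿ⁺¹ [n+1]_q = (q⁻¹ (-q⁻¹)ⁿ - q (-q)ⁿ) / (q - q⁻¹)`, the series of the theorem is
`t / (q - q⁻¹)` times `q⁻¹ (1 + q⁻¹ x t + q⁻² t²)⁻¹ - q (1 + q x t + q² t²)⁻¹`, while the two
quadratic factors are `q⁻¹ (1 + q x t + q² t²)` and `q (1 + q⁻¹ x t + q⁻² t²)`: the identity is a
partial fraction decomposition. -/

open PowerSeries in
theorem PowerSeries.mul_mk_eq_one_of_rec {R : Type*} [CommRing R] (b c : R) (u : ℕ → R)
    (h0 : u 0 = 1) (h1 : u 1 = b) (hrec : ∀ n, u (n + 2) = b * u (n + 1) - c * u n) :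
    (1 - C b * X + C c * X ^ 2) * mk u = 1 := by
  have hexpand : (1 - C b * X + C c * X ^ 2) * mk u =
      mk u - C b * (X * mk u) + C c * (X * (X * mk u)) := by
    ring
  ext n
  rw [hexpand, map_add, map_sub, coeff_C_mul, coeff_C_mul, coeff_one]
  rcases n with _ | _ | n
  · simp [h0]
  · simp [h0, h1]
  · simp [coeff_succ_X_mul, hrec]

theorem mul_mk_neg_pow_mul_Uc_eq_one (a : F) :
    (1 + PowerSeries.C (C a) * PowerSeries.C X * PowerSeries.X +
        PowerSeries.C (C a) ^ 2 * PowerSeries.X ^ 2) *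
      PowerSeries.mk (fun n => C (-a) ^ n * Uc F n) = 1 := by
  have h := PowerSeries.mul_mk_eq_one_of_rec (C (-a) * X) (C (-a) ^ 2)
    (fun n => C (-a) ^ n * Uc F n) (by simp [Uc]) (by simp [Uc]) fun n => by rw [Uc]; ring
  convert h using 2
  simp only [map_neg, map_mul, map_pow, neg_sq]
  ring

theorem neg_one_pow_succ_mul_qint (m : ℕ) :
    (-1) ^ (m + 1) * qint F q (m + 1 : ℕ) =
      (q - q⁻¹)⁻¹ * (q⁻¹ * (-q⁻¹) ^ m - q * (-q) ^ m) := by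
  simp only [qint, zpow_neg, zpow_natCast]
  rw [← inv_pow, neg_pow q, neg_pow q⁻¹, div_eq_inv_mul]
  ring

theorem U_succ_sub_one (m : ℕ) : U F ((m + 1 : ℕ) - 1 : ℤ) = Uc F m := by
  simp [U]

theorem mk_qint_smul_U_eq :
    PowerSeries.mk (fun n : ℕ => ((-1 : F) ^ n * qint F q (n : ℤ)) • U F ((n : ℤ) - 1)) =
      PowerSeries.X * (PowerSeries.C (C (q - q⁻¹)⁻¹) *
        (PowerSeries.C (C q⁻¹) * PowerSeries.mk (fun n => C (-q⁻¹) ^ n * Uc F n) -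
          PowerSeries.C (C q) * PowerSeries.mk (fun n => C (-q) ^ n * Uc F n))) := by
  ext (_ | m) : 1
  · simp [U]
  · rw [PowerSeries.coeff_succ_X_mul, PowerSeries.coeff_mk, U_succ_sub_one,
      neg_one_pow_succ_mul_qint]
    simp only [smul_eq_C_mul, map_mul, map_sub, map_pow, map_neg, PowerSeries.coeff_C_mul,
      PowerSeries.coeff_mk]
    ring

theorem chebyshev_gf_qint_general (F : Type) [Field F]
    (q : F) (hq : q ≠ 0) (hq1 : ∀ n : ℕ, n ≠ 0 → q ^ n ≠ 1) :
    (PowerSeries.C (R := Polynomial F) (Polynomial.C q) * PowerSeries.X ^ 2 +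
        PowerSeries.C (R := Polynomial F) Polynomial.X * PowerSeries.X +
        PowerSeries.C (R := Polynomial F) (Polynomial.C q⁻¹)) *
      ((PowerSeries.C (R := Polynomial F) (Polynomial.C q⁻¹) * PowerSeries.X ^ 2 +
        PowerSeries.C (R := Polynomial F) Polynomial.X * PowerSeries.X +
        PowerSeries.C (R := Polynomial F) (Polynomial.C q)) *
      PowerSeries.mk (fun n : ℕ => ((-1 : F) ^ n * qint F q (n : ℤ)) • U F ((n : ℤ) - 1))) =
      PowerSeries.X ^ 3 - PowerSeries.X := by
  have hd : q - q⁻¹ ≠ 0 := sub_ne_zero.mpr fun h ↦ hq1 2 two_ne_zero <| by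
    rw [sq]; nth_rw 2 [h]; exact mul_inv_cancel₀ hq
  rw [mk_qint_smul_U_eq]
  set t : PowerSeries F[X] := PowerSeries.X
  set x : PowerSeries F[X] := PowerSeries.C X
  set a : PowerSeries F[X] := PowerSeries.C (C q)
  set b : PowerSeries F[X] := PowerSeries.C (C q⁻¹)
  set c : PowerSeries F[X] := PowerSeries.C (C (q - q⁻¹)⁻¹)
  have hab : a * b = 1 := by rw [← map_mul, ← C_mul, mul_inv_cancel₀ hq, map_one, map_one]
  have hc : c * (a - b) = 1 := by
    rw [← map_sub, ← map_mul, ← C_sub, ← C_mul, inv_mul_cancel₀ hd, map_one, map_one]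
  set Da := 1 + a * x * t + a ^ 2 * t ^ 2
  set Db := 1 + b * x * t + b ^ 2 * t ^ 2
  have hfactor_a : a * t ^ 2 + x * t + b = b * Da := by
    linear_combination -(x * t + a * t ^ 2) * hab
  have hfactor_b : b * t ^ 2 + x * t + a = a * Db := by
    linear_combination -(x * t + b * t ^ 2) * hab
  rw [hfactor_a, hfactor_b]
  calc _ = a * b * t * c * (b * Da * (Db * PowerSeries.mk fun n => C (-q⁻¹) ^ n * Uc F n) -
        a * Db * (Da * PowerSeries.mk fun n => C (-q) ^ n * Uc F n)) := by ring
    _ = a * b * t * c * (b * Da - a * Db) := by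
      rw [mul_mk_neg_pow_mul_Uc_eq_one, mul_mk_neg_pow_mul_Uc_eq_one, mul_one, mul_one]
    _ = t ^ 3 - t := by
      linear_combination t * (t ^ 2 * (a * b) ^ 2 - a * b) * hc +
        t * (t ^ 2 * (a * b + 1) - 1) * hab

/-- In `(F[x])[[t]]`:
`(q t² + x t + q⁻¹)·(q⁻¹ t² + x t + q)·(∑_{n≥0} (−1)ⁿ [n]_q U_{n−1}(x) tⁿ) = t³ − t`. -/
theorem chebyshev_gf_qint (F : Type) [Field F] [IsAlgClosed F] [CharZero F]
    (q : F) (hq : q ≠ 0) (hq1 : ∀ n : ℕ, n ≠ 0 → q ^ n ≠ 1) :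
    (PowerSeries.C (R := Polynomial F) (Polynomial.C q) * PowerSeries.X ^ 2 +
        PowerSeries.C (R := Polynomial F) Polynomial.X * PowerSeries.X +
        PowerSeries.C (R := Polynomial F) (Polynomial.C q⁻¹)) *
      ((PowerSeries.C (R := Polynomial F) (Polynomial.C q⁻¹) * PowerSeries.X ^ 2 +
        PowerSeries.C (R := Polynomial F) Polynomial.X * PowerSeries.X +
        PowerSeries.C (R := Polynomial F) (Polynomial.C q)) *
      PowerSeries.mk (fun n : ℕ => ((-1 : F) ^ n * qint F q (n : ℤ)) • U F ((n : ℤ) - 1))) =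
      PowerSeries.X ^ 3 - PowerSeries.X :=
  chebyshev_gf_qint_general F q hq hq1
end
end

section
/- There exist F-algebra automorphisms t₀ and t₁ of Δ_q with the following properties: t₀(A) = A, t₀(B) = B + (qA²B − (q+q^{−1})ABA + q^{−1}BA²)/((q−q^{−1})(q²−q^{−2})), t₀(γ) = γ, and t₀^{−1}(B) = B + (q^{−1}A²B − (q+q^{−1})ABA + qBA²)/((q−q^{−1})(q²−q^{−2})); t₁(B) = B, t₁(A) = A + (qB²A − (q+q^{−1})BAB + q^{−1}AB²)/((q−q^{−1})(q²−q^{−2})), t₁(γ) = γ, and t₁^{−1}(A) = A + (q^{−1}B²A − (q+q^{−1})BAB + qAB²)/((q−q^{−1})(q²−q^{−2})). -/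
noncomputable section

variable (F : Type) [Field F] (q : F)

/-- Element `A + (qBC - q⁻¹CB)/(q² - q⁻²)` of the free algebra on generators A, B, C. -/
def eA : FreeAlgebra F (Fin 3) :=
  FreeAlgebra.ι F 0 + (q ^ 2 - q⁻¹ ^ 2)⁻¹ •
    (q • (FreeAlgebra.ι F 1 * FreeAlgebra.ι F 2) - q⁻¹ • (FreeAlgebra.ι F 2 * FreeAlgebra.ι F 1))

/-- Element `B + (qCA - q⁻¹AC)/(q² - q⁻²)` of the free algebra on generators A, B, C. -/
def eB : FreeAlgebra F (Fin 3) :=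
  FreeAlgebra.ι F 1 + (q ^ 2 - q⁻¹ ^ 2)⁻¹ •
    (q • (FreeAlgebra.ι F 2 * FreeAlgebra.ι F 0) - q⁻¹ • (FreeAlgebra.ι F 0 * FreeAlgebra.ι F 2))

/-- Element `C + (qAB - q⁻¹BA)/(q² - q⁻²)` of the free algebra on generators A, B, C. -/
def eC : FreeAlgebra F (Fin 3) :=
  FreeAlgebra.ι F 2 + (q ^ 2 - q⁻¹ ^ 2)⁻¹ •
    (q • (FreeAlgebra.ι F 0 * FreeAlgebra.ι F 1) - q⁻¹ • (FreeAlgebra.ι F 1 * FreeAlgebra.ι F 0))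

/-- Defining relations of the universal Askey–Wilson algebra: each of the three elements
`eA`, `eB`, `eC` commutes with each generator. -/
inductive AWRel : FreeAlgebra F (Fin 3) → FreeAlgebra F (Fin 3) → Prop
  | commA (i : Fin 3) : AWRel (eA F q * FreeAlgebra.ι F i) (FreeAlgebra.ι F i * eA F q)
  | commB (i : Fin 3) : AWRel (eB F q * FreeAlgebra.ι F i) (FreeAlgebra.ι F i * eB F q)
  | commC (i : Fin 3) : AWRel (eC F q * FreeAlgebra.ι F i) (FreeAlgebra.ι F i * eC F q)

/-- The universal Askey–Wilson algebra Δ_q. -/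
abbrev AW := RingQuot (AWRel F q)

/-- The generator A of Δ_q. -/
def Agen : AW F q := RingQuot.mkAlgHom F (AWRel F q) (FreeAlgebra.ι F 0)
/-- The generator B of Δ_q. -/
def Bgen : AW F q := RingQuot.mkAlgHom F (AWRel F q) (FreeAlgebra.ι F 1)
/-- The generator C of Δ_q. -/
def Cgen : AW F q := RingQuot.mkAlgHom F (AWRel F q) (FreeAlgebra.ι F 2)

/-- The central element α of Δ_q. -/
def αel : AW F q := (q + q⁻¹) • RingQuot.mkAlgHom F (AWRel F q) (eA F q)
/-- The central element β of Δ_q. -/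
def βel : AW F q := (q + q⁻¹) • RingQuot.mkAlgHom F (AWRel F q) (eB F q)
/-- The central element γ of Δ_q. -/
def γel : AW F q := (q + q⁻¹) • RingQuot.mkAlgHom F (AWRel F q) (eC F q)


section Aux
variable (F : Type) [Field F] (q : F)

/-- image of free algebra in AW -/
abbrev mkAW : FreeAlgebra F (Fin 3) →ₐ[F] AW F q := RingQuot.mkAlgHom F (AWRel F q)

def La : AW F q := mkAW F q (eA F q)
def Lb : AW F q := mkAW F q (eB F q)
def Lc : AW F q := mkAW F q (eC F q)

lemma mk_ι0 : mkAW F q (FreeAlgebra.ι F 0) = Agen F q := rfl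
lemma mk_ι1 : mkAW F q (FreeAlgebra.ι F 1) = Bgen F q := rfl
lemma mk_ι2 : mkAW F q (FreeAlgebra.ι F 2) = Cgen F q := rfl

lemma La_eq : La F q = Agen F q + (q ^ 2 - q⁻¹ ^ 2)⁻¹ •
    (q • (Bgen F q * Cgen F q) - q⁻¹ • (Cgen F q * Bgen F q)) := by
  simp [La, eA, map_add, map_smul, map_sub, map_mul, mk_ι0, mk_ι1, mk_ι2]

lemma Lb_eq : Lb F q = Bgen F q + (q ^ 2 - q⁻¹ ^ 2)⁻¹ •
    (q • (Cgen F q * Agen F q) - q⁻¹ • (Agen F q * Cgen F q)) := by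
  simp [Lb, eB, map_add, map_smul, map_sub, map_mul, mk_ι0, mk_ι1, mk_ι2]

lemma Lc_eq : Lc F q = Cgen F q + (q ^ 2 - q⁻¹ ^ 2)⁻¹ •
    (q • (Agen F q * Bgen F q) - q⁻¹ • (Bgen F q * Agen F q)) := by
  simp [Lc, eC, map_add, map_smul, map_sub, map_mul, mk_ι0, mk_ι1, mk_ι2]

lemma comm_La (i : Fin 3) : Commute (La F q) (mkAW F q (FreeAlgebra.ι F i)) := by
  have h := RingQuot.mkAlgHom_rel F (AWRel.commA (F := F) (q := q) i)
  rw [map_mul, map_mul] at h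
  exact h

lemma comm_Lb (i : Fin 3) : Commute (Lb F q) (mkAW F q (FreeAlgebra.ι F i)) := by
  have h := RingQuot.mkAlgHom_rel F (AWRel.commB (F := F) (q := q) i)
  rw [map_mul, map_mul] at h
  exact h

lemma comm_Lc (i : Fin 3) : Commute (Lc F q) (mkAW F q (FreeAlgebra.ι F i)) := by
  have h := RingQuot.mkAlgHom_rel F (AWRel.commC (F := F) (q := q) i)
  rw [map_mul, map_mul] at h
  exact h

end Aux

section Aux2
variable (F : Type) [Field F] (q : F)

local notation "a" => Agen F q
local notation "b" => Bgen F q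
local notation "c" => Cgen F q

/-- commutation of Lc with a, rearranged -/
lemma key1 : c * a = a * c + (q ^ 2 - q⁻¹ ^ 2)⁻¹ •
    (q • (a * (a * b)) - (q + q⁻¹) • (a * (b * a)) + q⁻¹ • (b * (a * a))) := by
  have h : Lc F q * a = a * Lc F q := comm_Lc F q 0
  rw [Lc_eq] at h
  have h2 : c * a =
      a * (c + (q ^ 2 - q⁻¹ ^ 2)⁻¹ • (q • (a * b) - q⁻¹ • (b * a)))
      - ((q ^ 2 - q⁻¹ ^ 2)⁻¹ • (q • (a * b) - q⁻¹ • (b * a))) * a := by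
    rw [← h]; noncomm_ring
  rw [h2]
  simp only [mul_add, add_mul, mul_sub, sub_mul, mul_smul_comm, smul_mul_assoc, smul_sub, smul_add, smul_smul, mul_assoc]
  match_scalars <;> ring

lemma key2 : b * c = c * b + (q ^ 2 - q⁻¹ ^ 2)⁻¹ •
    (q • (a * (b * b)) - (q + q⁻¹) • (b * (a * b)) + q⁻¹ • (b * (b * a))) := by
  have h : Lc F q * b = b * Lc F q := comm_Lc F q 1
  rw [Lc_eq] at h
  have h2 : b * c =
      (c + (q ^ 2 - q⁻¹ ^ 2)⁻¹ • (q • (a * b) - q⁻¹ • (b * a))) * b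
      - b * ((q ^ 2 - q⁻¹ ^ 2)⁻¹ • (q • (a * b) - q⁻¹ • (b * a))) := by
    rw [h]; noncomm_ring
  rw [h2]
  simp only [mul_add, add_mul, mul_sub, sub_mul, mul_smul_comm, smul_mul_assoc, smul_sub, smul_add, smul_smul, mul_assoc]
  match_scalars <;> ring

end Aux2

section Homs
variable (F : Type) [Field F] (q : F)

local notation "a" => Agen F q
local notation "b" => Bgen F q
local notation "c" => Cgen F q

/-- free-algebra lift for ρ : A ↦ B ↦ C ↦ A -/
def fρ : FreeAlgebra F (Fin 3) →ₐ[F] AW F q := FreeAlgebra.lift F ![b, c, a]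
/-- free-algebra lift for ρ⁻¹ -/
def fρ' : FreeAlgebra F (Fin 3) →ₐ[F] AW F q := FreeAlgebra.lift F ![c, a, b]

lemma fρ_ι (i : Fin 3) : fρ F q (FreeAlgebra.ι F i) = ![b, c, a] i := by simp [fρ]
lemma fρ'_ι (i : Fin 3) : fρ' F q (FreeAlgebra.ι F i) = ![c, a, b] i := by simp [fρ']

lemma fρ_ι0 : fρ F q (FreeAlgebra.ι F 0) = b := fρ_ι F q 0
lemma fρ_ι1 : fρ F q (FreeAlgebra.ι F 1) = c := fρ_ι F q 1
lemma fρ_ι2 : fρ F q (FreeAlgebra.ι F 2) = a := fρ_ι F q 2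
lemma fρ'_ι0 : fρ' F q (FreeAlgebra.ι F 0) = c := fρ'_ι F q 0
lemma fρ'_ι1 : fρ' F q (FreeAlgebra.ι F 1) = a := fρ'_ι F q 1
lemma fρ'_ι2 : fρ' F q (FreeAlgebra.ι F 2) = b := fρ'_ι F q 2

lemma fρ_eA : fρ F q (eA F q) = Lb F q := by
  rw [Lb_eq]
  simp [eA, map_add, map_smul, map_sub, map_mul, fρ_ι0, fρ_ι1, fρ_ι2]

lemma fρ_eB : fρ F q (eB F q) = Lc F q := by
  rw [Lc_eq]
  simp [eB, map_add, map_smul, map_sub, map_mul, fρ_ι0, fρ_ι1, fρ_ι2]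

lemma fρ_eC : fρ F q (eC F q) = La F q := by
  rw [La_eq]
  simp [eC, map_add, map_smul, map_sub, map_mul, fρ_ι0, fρ_ι1, fρ_ι2]

lemma fρ'_eA : fρ' F q (eA F q) = Lc F q := by
  rw [Lc_eq]
  simp [eA, map_add, map_smul, map_sub, map_mul, fρ'_ι0, fρ'_ι1, fρ'_ι2]

lemma fρ'_eB : fρ' F q (eB F q) = La F q := by
  rw [La_eq]
  simp [eB, map_add, map_smul, map_sub, map_mul, fρ'_ι0, fρ'_ι1, fρ'_ι2]

lemma fρ'_eC : fρ' F q (eC F q) = Lb F q := by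
  rw [Lb_eq]
  simp [eC, map_add, map_smul, map_sub, map_mul, fρ'_ι0, fρ'_ι1, fρ'_ι2]

lemma ρrel : ∀ ⦃x y⦄, AWRel F q x y → fρ F q x = fρ F q y := by
  intro x y h
  induction h with
  | commA i =>
      rw [map_mul, map_mul, fρ_eA, fρ_ι]
      fin_cases i
      exacts [comm_Lb F q 1, comm_Lb F q 2, comm_Lb F q 0]
  | commB i =>
      rw [map_mul, map_mul, fρ_eB, fρ_ι]
      fin_cases i
      exacts [comm_Lc F q 1, comm_Lc F q 2, comm_Lc F q 0]
  | commC i =>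
      rw [map_mul, map_mul, fρ_eC, fρ_ι]
      fin_cases i
      exacts [comm_La F q 1, comm_La F q 2, comm_La F q 0]

lemma ρ'rel : ∀ ⦃x y⦄, AWRel F q x y → fρ' F q x = fρ' F q y := by
  intro x y h
  induction h with
  | commA i =>
      rw [map_mul, map_mul, fρ'_eA, fρ'_ι]
      fin_cases i
      exacts [comm_Lc F q 2, comm_Lc F q 0, comm_Lc F q 1]
  | commB i =>
      rw [map_mul, map_mul, fρ'_eB, fρ'_ι]
      fin_cases i
      exacts [comm_La F q 2, comm_La F q 0, comm_La F q 1]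
  | commC i =>
      rw [map_mul, map_mul, fρ'_eC, fρ'_ι]
      fin_cases i
      exacts [comm_Lb F q 2, comm_Lb F q 0, comm_Lb F q 1]

def ρhom : AW F q →ₐ[F] AW F q := RingQuot.liftAlgHom F ⟨fρ F q, ρrel F q⟩
def ρ'hom : AW F q →ₐ[F] AW F q := RingQuot.liftAlgHom F ⟨fρ' F q, ρ'rel F q⟩

lemma ρhom_mk (x : FreeAlgebra F (Fin 3)) : ρhom F q (mkAW F q x) = fρ F q x :=
  RingQuot.liftAlgHom_mkAlgHom_apply F _ _ x
lemma ρ'hom_mk (x : FreeAlgebra F (Fin 3)) : ρ'hom F q (mkAW F q x) = fρ' F q x :=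
  RingQuot.liftAlgHom_mkAlgHom_apply F _ _ x

lemma hom_ext {f g : AW F q →ₐ[F] AW F q}
    (h : ∀ i, f (mkAW F q (FreeAlgebra.ι F i)) = g (mkAW F q (FreeAlgebra.ι F i))) : f = g := by
  apply RingQuot.ringQuot_ext'
  apply FreeAlgebra.hom_ext
  funext i
  simpa using h i

lemma ρρ' : (ρhom F q).comp (ρ'hom F q) = AlgHom.id F (AW F q) := by
  apply hom_ext
  intro i
  rw [AlgHom.comp_apply, AlgHom.id_apply, ρ'hom_mk, fρ'_ι]
  fin_cases i
  exacts [(ρhom_mk F q (FreeAlgebra.ι F 2)).trans (fρ_ι2 F q),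
    (ρhom_mk F q (FreeAlgebra.ι F 0)).trans (fρ_ι0 F q),
    (ρhom_mk F q (FreeAlgebra.ι F 1)).trans (fρ_ι1 F q)]

lemma ρ'ρ : (ρ'hom F q).comp (ρhom F q) = AlgHom.id F (AW F q) := by
  apply hom_ext
  intro i
  rw [AlgHom.comp_apply, AlgHom.id_apply, ρhom_mk, fρ_ι]
  fin_cases i
  exacts [(ρ'hom_mk F q (FreeAlgebra.ι F 1)).trans (fρ'_ι1 F q),
    (ρ'hom_mk F q (FreeAlgebra.ι F 2)).trans (fρ'_ι2 F q),
    (ρ'hom_mk F q (FreeAlgebra.ι F 0)).trans (fρ'_ι0 F q)]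

def ρe : AW F q ≃ₐ[F] AW F q := AlgEquiv.ofAlgHom (ρhom F q) (ρ'hom F q) (ρρ' F q) (ρ'ρ F q)

lemma ρe_a : ρe F q a = b := ρhom_mk F q _ |>.trans (fρ_ι0 F q)
lemma ρe_b : ρe F q b = c := ρhom_mk F q _ |>.trans (fρ_ι1 F q)
lemma ρe_c : ρe F q c = a := ρhom_mk F q _ |>.trans (fρ_ι2 F q)
lemma ρe_symm_a : (ρe F q).symm a = c := ρ'hom_mk F q _ |>.trans (fρ'_ι0 F q)
lemma ρe_symm_b : (ρe F q).symm b = a := ρ'hom_mk F q _ |>.trans (fρ'_ι1 F q)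
lemma ρe_symm_c : (ρe F q).symm c = b := ρ'hom_mk F q _ |>.trans (fρ'_ι2 F q)
lemma ρe_La : ρe F q (La F q) = Lb F q := ρhom_mk F q _ |>.trans (fρ_eA F q)
lemma ρe_Lb : ρe F q (Lb F q) = Lc F q := ρhom_mk F q _ |>.trans (fρ_eB F q)
lemma ρe_Lc : ρe F q (Lc F q) = La F q := ρhom_mk F q _ |>.trans (fρ_eC F q)
lemma ρe_symm_La : (ρe F q).symm (La F q) = Lc F q := ρ'hom_mk F q _ |>.trans (fρ'_eA F q)
lemma ρe_symm_Lb : (ρe F q).symm (Lb F q) = La F q := ρ'hom_mk F q _ |>.trans (fρ'_eB F q)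
lemma ρe_symm_Lc : (ρe F q).symm (Lc F q) = Lb F q := ρ'hom_mk F q _ |>.trans (fρ'_eC F q)

end Homs

section Sigma
variable (F : Type) [Field F] (q : F)

local notation "a" => Agen F q
local notation "b" => Bgen F q
local notation "c" => Cgen F q

/-- image of C under σ -/
def σc : AW F q := c + (q - q⁻¹)⁻¹ • (a * b - b * a)

/-- free-algebra lift for σ : A ↔ B, C ↦ σc -/
def fσ : FreeAlgebra F (Fin 3) →ₐ[F] AW F q := FreeAlgebra.lift F ![b, a, σc F q]

lemma fσ_ι (i : Fin 3) : fσ F q (FreeAlgebra.ι F i) = ![b, a, σc F q] i := by simp [fσ]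
lemma fσ_ι0 : fσ F q (FreeAlgebra.ι F 0) = b := fσ_ι F q 0
lemma fσ_ι1 : fσ F q (FreeAlgebra.ι F 1) = a := fσ_ι F q 1
lemma fσ_ι2 : fσ F q (FreeAlgebra.ι F 2) = σc F q := fσ_ι F q 2

variable {q} (hq : q ≠ 0) (ht : q - q⁻¹ ≠ 0) (hs : q + q⁻¹ ≠ 0)
include hq ht hs

lemma hss : q ^ 2 - q⁻¹ ^ 2 ≠ 0 := by
  have : q ^ 2 - q⁻¹ ^ 2 = (q - q⁻¹) * (q + q⁻¹) := by ring
  rw [this]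
  exact mul_ne_zero ht hs

set_option maxHeartbeats 1000000 in
lemma fσ_eC : fσ F q (eC F q) = Lc F q := by
  have e : q ^ 2 - q⁻¹ ^ 2 = (q - q⁻¹) * (q + q⁻¹) := by ring
  have htu : (q - q⁻¹)⁻¹ = (q + q⁻¹) * (q ^ 2 - q⁻¹ ^ 2)⁻¹ := by
    rw [e, mul_inv, mul_comm ((q - q⁻¹)⁻¹), ← mul_assoc, mul_inv_cancel₀ hs, one_mul]
  rw [Lc_eq]
  simp only [eC, map_add, map_smul, map_sub, map_mul, fσ_ι0, fσ_ι1, fσ_ι2, σc, htu]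
  simp only [mul_add, add_mul, mul_sub, sub_mul, mul_smul_comm, smul_mul_assoc, smul_sub,
    smul_add, smul_smul, mul_assoc]
  generalize (q ^ 2 - q⁻¹ ^ 2)⁻¹ = u
  match_scalars <;> ring

set_option maxHeartbeats 1000000 in
lemma fσ_eA : fσ F q (eA F q) = Lb F q := by
  have e : q ^ 2 - q⁻¹ ^ 2 = (q - q⁻¹) * (q + q⁻¹) := by ring
  have htu : (q - q⁻¹)⁻¹ = (q + q⁻¹) * (q ^ 2 - q⁻¹ ^ 2)⁻¹ := by
    rw [e, mul_inv, mul_comm ((q - q⁻¹)⁻¹), ← mul_assoc, mul_inv_cancel₀ hs, one_mul]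
  rw [Lb_eq]
  simp only [eA, map_add, map_smul, map_sub, map_mul, fσ_ι0, fσ_ι1, fσ_ι2, σc, htu]
  simp only [mul_add, add_mul, mul_sub, sub_mul, mul_smul_comm, smul_mul_assoc, smul_sub,
    smul_add, smul_smul, mul_assoc]
  rw [key1]
  generalize (q ^ 2 - q⁻¹ ^ 2)⁻¹ = u
  match_scalars <;> ring

set_option maxHeartbeats 1000000 in
lemma fσ_eB : fσ F q (eB F q) = La F q := by
  have e : q ^ 2 - q⁻¹ ^ 2 = (q - q⁻¹) * (q + q⁻¹) := by ring
  have htu : (q - q⁻¹)⁻¹ = (q + q⁻¹) * (q ^ 2 - q⁻¹ ^ 2)⁻¹ := by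
    rw [e, mul_inv, mul_comm ((q - q⁻¹)⁻¹), ← mul_assoc, mul_inv_cancel₀ hs, one_mul]
  rw [La_eq]
  simp only [eB, map_add, map_smul, map_sub, map_mul, fσ_ι0, fσ_ι1, fσ_ι2, σc, htu]
  simp only [mul_add, add_mul, mul_sub, sub_mul, mul_smul_comm, smul_mul_assoc, smul_sub,
    smul_add, smul_smul, mul_assoc]
  rw [key2]
  generalize (q ^ 2 - q⁻¹ ^ 2)⁻¹ = u
  match_scalars <;> ring

omit hq ht hs

lemma comm_La_σc : Commute (La F q) (σc F q) :=
  ((comm_La F q 2).add_right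
    ((((comm_La F q 0).mul_right (comm_La F q 1)).sub_right
      ((comm_La F q 1).mul_right (comm_La F q 0))).smul_right _))

lemma comm_Lb_σc : Commute (Lb F q) (σc F q) :=
  ((comm_Lb F q 2).add_right
    ((((comm_Lb F q 0).mul_right (comm_Lb F q 1)).sub_right
      ((comm_Lb F q 1).mul_right (comm_Lb F q 0))).smul_right _))

lemma comm_Lc_σc : Commute (Lc F q) (σc F q) :=
  ((comm_Lc F q 2).add_right
    ((((comm_Lc F q 0).mul_right (comm_Lc F q 1)).sub_right
      ((comm_Lc F q 1).mul_right (comm_Lc F q 0))).smul_right _))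

include hq ht hs

lemma σrel : ∀ ⦃x y⦄, AWRel F q x y → fσ F q x = fσ F q y := by
  intro x y h
  induction h with
  | commA i =>
      rw [map_mul, map_mul, fσ_eA F hq ht hs, fσ_ι]
      fin_cases i
      exacts [comm_Lb F q 1, comm_Lb F q 0, comm_Lb_σc F]
  | commB i =>
      rw [map_mul, map_mul, fσ_eB F hq ht hs, fσ_ι]
      fin_cases i
      exacts [comm_La F q 1, comm_La F q 0, comm_La_σc F]
  | commC i =>
      rw [map_mul, map_mul, fσ_eC F hq ht hs, fσ_ι]
      fin_cases i
      exacts [comm_Lc F q 1, comm_Lc F q 0, comm_Lc_σc F]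

def σhom : AW F q →ₐ[F] AW F q := RingQuot.liftAlgHom F ⟨fσ F q, σrel F hq ht hs⟩

lemma σhom_mk (x : FreeAlgebra F (Fin 3)) : σhom F hq ht hs (mkAW F q x) = fσ F q x :=
  RingQuot.liftAlgHom_mkAlgHom_apply F _ _ x

lemma σhom_a : σhom F hq ht hs a = b := (σhom_mk F hq ht hs _).trans (fσ_ι0 F q)
lemma σhom_b : σhom F hq ht hs b = a := (σhom_mk F hq ht hs _).trans (fσ_ι1 F q)
lemma σhom_c : σhom F hq ht hs c = σc F q := (σhom_mk F hq ht hs _).trans (fσ_ι2 F q)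

lemma σhom_σc : σhom F hq ht hs (σc F q) = c := by
  rw [σc, map_add, map_smul, map_sub, map_mul, map_mul, σhom_a F hq ht hs, σhom_b F hq ht hs,
    σhom_c F hq ht hs, σc]
  match_scalars <;> ring

lemma σσ : (σhom F hq ht hs).comp (σhom F hq ht hs) = AlgHom.id F (AW F q) := by
  apply hom_ext
  intro i
  rw [AlgHom.comp_apply, AlgHom.id_apply, σhom_mk F hq ht hs, fσ_ι]
  fin_cases i
  exacts [σhom_b F hq ht hs, σhom_a F hq ht hs, σhom_σc F hq ht hs]

def σe : AW F q ≃ₐ[F] AW F q :=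
  AlgEquiv.ofAlgHom (σhom F hq ht hs) (σhom F hq ht hs) (σσ F hq ht hs) (σσ F hq ht hs)

lemma σe_a : σe F hq ht hs a = b := σhom_a F hq ht hs
lemma σe_b : σe F hq ht hs b = a := σhom_b F hq ht hs
lemma σe_c : σe F hq ht hs c = σc F q := σhom_c F hq ht hs
lemma σe_symm_a : (σe F hq ht hs).symm a = b := σhom_a F hq ht hs
lemma σe_symm_b : (σe F hq ht hs).symm b = a := σhom_b F hq ht hs
lemma σe_symm_c : (σe F hq ht hs).symm c = σc F q := σhom_c F hq ht hs
lemma σe_La : σe F hq ht hs (La F q) = Lb F q := (σhom_mk F hq ht hs _).trans (fσ_eA F hq ht hs)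
lemma σe_Lb : σe F hq ht hs (Lb F q) = La F q := (σhom_mk F hq ht hs _).trans (fσ_eB F hq ht hs)
lemma σe_Lc : σe F hq ht hs (Lc F q) = Lc F q := (σhom_mk F hq ht hs _).trans (fσ_eC F hq ht hs)
lemma σe_symm_La : (σe F hq ht hs).symm (La F q) = Lb F q := σe_La F hq ht hs
lemma σe_symm_Lb : (σe F hq ht hs).symm (Lb F q) = La F q := σe_Lb F hq ht hs
lemma σe_symm_Lc : (σe F hq ht hs).symm (Lc F q) = Lc F q := σe_Lc F hq ht hs

end Sigma

section Final
variable (F : Type) [Field F] {q : F} (hq : q ≠ 0) (ht : q - q⁻¹ ≠ 0) (hs : q + q⁻¹ ≠ 0)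

local notation "a" => Agen F q
local notation "b" => Bgen F q
local notation "c" => Cgen F q

include hq ht hs

/-- The automorphism t₀ = (ρ⁻¹ ∘ σ)². -/
def t0e : AW F q ≃ₐ[F] AW F q :=
  ((σe F hq ht hs).trans (ρe F q).symm).trans ((σe F hq ht hs).trans (ρe F q).symm)

/-- The automorphism t₁ = (σ ∘ ρ⁻¹)². -/
def t1e : AW F q ≃ₐ[F] AW F q :=
  ((ρe F q).symm.trans (σe F hq ht hs)).trans ((ρe F q).symm.trans (σe F hq ht hs))

lemma t0e_a : t0e F hq ht hs a = a := by
  rw [t0e]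
  simp only [AlgEquiv.trans_apply, σe_a, ρe_symm_b]

set_option maxHeartbeats 2000000 in
lemma t0e_b : t0e F hq ht hs b = b + (((q - q⁻¹) * (q ^ 2 - q⁻¹ ^ 2))⁻¹) •
    (q • (a ^ 2 * b) - (q + q⁻¹) • (a * b * a) + q⁻¹ • (b * a ^ 2)) := by
  have e : q ^ 2 - q⁻¹ ^ 2 = (q - q⁻¹) * (q + q⁻¹) := by ring
  have htu : (q - q⁻¹)⁻¹ = (q + q⁻¹) * (q ^ 2 - q⁻¹ ^ 2)⁻¹ := by
    rw [e, mul_inv, mul_comm ((q - q⁻¹)⁻¹), ← mul_assoc, mul_inv_cancel₀ hs, one_mul]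
  rw [t0e]
  simp only [AlgEquiv.trans_apply, σe_b, ρe_symm_a, σe_c]
  rw [show σc F q = c + (q - q⁻¹)⁻¹ • (a * b - b * a) from rfl]
  rw [map_add, map_smul, map_sub, map_mul, map_mul, ρe_symm_a, ρe_symm_b, ρe_symm_c]
  rw [mul_inv]
  simp only [htu]
  simp only [pow_two (Agen F q), pow_two (Bgen F q), mul_add, add_mul, mul_sub, sub_mul, mul_smul_comm, smul_mul_assoc,
    smul_sub, smul_add, smul_smul, mul_assoc]
  rw [key1]
  generalize (q ^ 2 - q⁻¹ ^ 2)⁻¹ = u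
  match_scalars <;> ring

lemma t0e_γ : t0e F hq ht hs (γel F q) = γel F q := by
  rw [show γel F q = (q + q⁻¹) • Lc F q from rfl, map_smul, t0e]
  simp only [AlgEquiv.trans_apply, σe_Lc, ρe_symm_Lc, σe_Lb, ρe_symm_La]

set_option maxHeartbeats 2000000 in
lemma t0e_symm_b : (t0e F hq ht hs).symm b = b + (((q - q⁻¹) * (q ^ 2 - q⁻¹ ^ 2))⁻¹) •
    (q⁻¹ • (a ^ 2 * b) - (q + q⁻¹) • (a * b * a) + q • (b * a ^ 2)) := by
  have e : q ^ 2 - q⁻¹ ^ 2 = (q - q⁻¹) * (q + q⁻¹) := by ring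
  have htu : (q - q⁻¹)⁻¹ = (q + q⁻¹) * (q ^ 2 - q⁻¹ ^ 2)⁻¹ := by
    rw [e, mul_inv, mul_comm ((q - q⁻¹)⁻¹), ← mul_assoc, mul_inv_cancel₀ hs, one_mul]
  rw [t0e]
  simp only [AlgEquiv.symm_trans_apply, AlgEquiv.symm_symm]
  rw [ρe_b, σe_symm_c]
  rw [show σc F q = c + (q - q⁻¹)⁻¹ • (a * b - b * a) from rfl]
  rw [map_add, map_smul, map_sub, map_mul, map_mul, ρe_c, ρe_a, ρe_b]
  rw [map_add, map_smul, map_sub, map_mul, map_mul, σe_symm_a, σe_symm_b, σe_symm_c]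
  rw [show σc F q = c + (q - q⁻¹)⁻¹ • (a * b - b * a) from rfl]
  rw [mul_inv]
  simp only [htu]
  simp only [pow_two (Agen F q), pow_two (Bgen F q), mul_add, add_mul, mul_sub, sub_mul, mul_smul_comm, smul_mul_assoc,
    smul_sub, smul_add, smul_smul, mul_assoc]
  rw [key1]
  generalize (q ^ 2 - q⁻¹ ^ 2)⁻¹ = u
  match_scalars <;> ring

lemma t1e_b : t1e F hq ht hs b = b := by
  rw [t1e]
  simp only [AlgEquiv.trans_apply, ρe_symm_b, σe_a]

set_option maxHeartbeats 2000000 in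
lemma t1e_a : t1e F hq ht hs a = a + (((q - q⁻¹) * (q ^ 2 - q⁻¹ ^ 2))⁻¹) •
    (q • (b ^ 2 * a) - (q + q⁻¹) • (b * a * b) + q⁻¹ • (a * b ^ 2)) := by
  have e : q ^ 2 - q⁻¹ ^ 2 = (q - q⁻¹) * (q + q⁻¹) := by ring
  have htu : (q - q⁻¹)⁻¹ = (q + q⁻¹) * (q ^ 2 - q⁻¹ ^ 2)⁻¹ := by
    rw [e, mul_inv, mul_comm ((q - q⁻¹)⁻¹), ← mul_assoc, mul_inv_cancel₀ hs, one_mul]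
  rw [t1e]
  simp only [AlgEquiv.trans_apply, ρe_symm_a, σe_c]
  rw [show σc F q = c + (q - q⁻¹)⁻¹ • (a * b - b * a) from rfl]
  rw [map_add, map_smul, map_sub, map_mul, map_mul, ρe_symm_a, ρe_symm_b, ρe_symm_c]
  rw [map_add, map_smul, map_sub, map_mul, map_mul, σe_b, σe_c, σe_a]
  rw [show σc F q = c + (q - q⁻¹)⁻¹ • (a * b - b * a) from rfl]
  rw [mul_inv]
  simp only [htu]
  simp only [pow_two (Agen F q), pow_two (Bgen F q), mul_add, add_mul, mul_sub, sub_mul, mul_smul_comm, smul_mul_assoc,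
    smul_sub, smul_add, smul_smul, mul_assoc]
  rw [key2]
  generalize (q ^ 2 - q⁻¹ ^ 2)⁻¹ = u
  match_scalars <;> ring

lemma t1e_γ : t1e F hq ht hs (γel F q) = γel F q := by
  rw [show γel F q = (q + q⁻¹) • Lc F q from rfl, map_smul, t1e]
  simp only [AlgEquiv.trans_apply, ρe_symm_Lc, σe_Lb, ρe_symm_La, σe_Lc]

set_option maxHeartbeats 2000000 in
lemma t1e_symm_a : (t1e F hq ht hs).symm a = a + (((q - q⁻¹) * (q ^ 2 - q⁻¹ ^ 2))⁻¹) •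
    (q⁻¹ • (b ^ 2 * a) - (q + q⁻¹) • (b * a * b) + q • (a * b ^ 2)) := by
  have e : q ^ 2 - q⁻¹ ^ 2 = (q - q⁻¹) * (q + q⁻¹) := by ring
  have htu : (q - q⁻¹)⁻¹ = (q + q⁻¹) * (q ^ 2 - q⁻¹ ^ 2)⁻¹ := by
    rw [e, mul_inv, mul_comm ((q - q⁻¹)⁻¹), ← mul_assoc, mul_inv_cancel₀ hs, one_mul]
  rw [t1e]
  simp only [AlgEquiv.symm_trans_apply, AlgEquiv.symm_symm]
  rw [σe_symm_a, ρe_b, σe_symm_c]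
  rw [show σc F q = c + (q - q⁻¹)⁻¹ • (a * b - b * a) from rfl]
  rw [map_add, map_smul, map_sub, map_mul, map_mul, ρe_c, ρe_a, ρe_b]
  rw [mul_inv]
  simp only [htu]
  simp only [pow_two (Agen F q), pow_two (Bgen F q), mul_add, add_mul, mul_sub, sub_mul, mul_smul_comm, smul_mul_assoc,
    smul_sub, smul_add, smul_smul, mul_assoc]
  rw [key2]
  generalize (q ^ 2 - q⁻¹ ^ 2)⁻¹ = u
  match_scalars <;> ring

end Final
/-- There exist F-algebra automorphisms `t₀`, `t₁` of Δ_q acting as stated on `A`, `B`, `γ`. -/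
theorem exists_t0_t1 (F : Type) [Field F] [IsAlgClosed F] [CharZero F]
    (q : F) (hq : q ≠ 0) (hq1 : ∀ n : ℕ, n ≠ 0 → q ^ n ≠ 1) :
    ∃ t0 t1 : AW F q ≃ₐ[F] AW F q,
      t0 (Agen F q) = Agen F q ∧
      t0 (Bgen F q) = Bgen F q + (((q - q⁻¹) * (q ^ 2 - q⁻¹ ^ 2))⁻¹) •
        (q • (Agen F q ^ 2 * Bgen F q) - (q + q⁻¹) • (Agen F q * Bgen F q * Agen F q) +
          q⁻¹ • (Bgen F q * Agen F q ^ 2)) ∧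
      t0 (γel F q) = γel F q ∧
      t0.symm (Bgen F q) = Bgen F q + (((q - q⁻¹) * (q ^ 2 - q⁻¹ ^ 2))⁻¹) •
        (q⁻¹ • (Agen F q ^ 2 * Bgen F q) - (q + q⁻¹) • (Agen F q * Bgen F q * Agen F q) +
          q • (Bgen F q * Agen F q ^ 2)) ∧
      t1 (Bgen F q) = Bgen F q ∧
      t1 (Agen F q) = Agen F q + (((q - q⁻¹) * (q ^ 2 - q⁻¹ ^ 2))⁻¹) •
        (q • (Bgen F q ^ 2 * Agen F q) - (q + q⁻¹) • (Bgen F q * Agen F q * Bgen F q) +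
          q⁻¹ • (Agen F q * Bgen F q ^ 2)) ∧
      t1 (γel F q) = γel F q ∧
      t1.symm (Agen F q) = Agen F q + (((q - q⁻¹) * (q ^ 2 - q⁻¹ ^ 2))⁻¹) •
        (q⁻¹ • (Bgen F q ^ 2 * Agen F q) - (q + q⁻¹) • (Bgen F q * Agen F q * Bgen F q) +
          q • (Agen F q * Bgen F q ^ 2)) := by
  have ht : q - q⁻¹ ≠ 0 := by
    intro h
    have h2 : q = q⁻¹ := sub_eq_zero.mp h
    have e2 : q ^ 2 = 1 := by
      rw [pow_two]; nth_rewrite 2 [h2]; exact mul_inv_cancel₀ hq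
    exact hq1 2 two_ne_zero e2
  have hs : q + q⁻¹ ≠ 0 := by
    intro h
    have h2 : q = -q⁻¹ := eq_neg_of_add_eq_zero_left h
    have e2 : q ^ 2 = -1 := by
      rw [pow_two]; nth_rewrite 2 [h2]; rw [mul_neg, mul_inv_cancel₀ hq]
    have e4 : q ^ 4 = 1 := by
      rw [show (4 : ℕ) = 2 * 2 from rfl, pow_mul, e2]; ring
    exact hq1 4 (by norm_num) e4
  exact ⟨t0e F hq ht hs, t1e F hq ht hs, t0e_a F hq ht hs, t0e_b F hq ht hs,
    t0e_γ F hq ht hs, t0e_symm_b F hq ht hs, t1e_b F hq ht hs, t1e_a F hq ht hs,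
    t1e_γ F hq ht hs, t1e_symm_a F hq ht hs⟩
end
end
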